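/- arXiv:1611.10157 — 2 statements merged into one kernel-verified Lean document; each statement's English description precedes it below -/
import Mathlib

section
/- Let (Ω, ℱ, ℙ) be a probability space, α a measurable space, X : Ω → α and S : Ω → ℝ measurable, and let ρ be the law of the pair (X, S) on α × ℝ, with first marginal ρ.fst and conditional cumulative distribution functions condCDF ρ a. Assume that for ρ.fst-almost every a the function t ↦ condCDF ρ a t is continuous, and that for some real number T one has ∫_Ω (1 − condCDF ρ (X(ω)) (min(S(ω), T)))^{−1} ℙ(dω) < ∞. Then for every measurable set B ⊆ α with ℙ(X ∈ B) > 0 one has ℙ({X ∈ B} ∩ {S > T}) > 0; equivalently, ℙ(S > T | σ(X)) > 0 almost surely. -/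
/-!
Suppose `{X ∈ B, S > T}` were null. Disintegrating `ρ = ρ.fst ⊗ dF_a` with `F_a = condCDF ρ a`,
for `ρ.fst`-a.e. `a ∈ B` the law `dF_a` puts no mass beyond `T`, so `F_a (min s T) = F_a s`,
while the finite moment makes `∫ (1 - F_a (min s T))⁻¹ dF_a(s)` finite for a.e. `a`.
But for a continuous `F` the variable `F(s)` is uniform on `[0, 1]` under `dF`, so
`∫ (1 - F)⁻¹ dF = ∫₀¹ (1 - u)⁻¹ du = ∞`: the stretch where `F` climbs from `1 - 2⁻ⁿ` to
`1 - 2⁻ⁿ⁻¹` already contributes `1/2`.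
-/

open MeasureTheory ProbabilityTheory Set Filter Topology
open scoped ENNReal

namespace StieltjesFunction

lemma ofReal_div_one_sub_le_setLIntegral_Ioc (F : StieltjesFunction ℝ) {a b : ℝ} (hab : a ≤ b)
    (hb : F b < 1) :
    ENNReal.ofReal ((F b - F a) / (1 - F a))
      ≤ ∫⁻ s in Ioc a b, ENNReal.ofReal ((1 - F s)⁻¹) ∂F.measure := by
  have ha : F a < 1 := (F.mono hab).trans_lt hb
  calc ENNReal.ofReal ((F b - F a) / (1 - F a))
      = ENNReal.ofReal ((1 - F a)⁻¹) * F.measure (Ioc a b) := by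
        rw [F.measure_Ioc, ← ENNReal.ofReal_mul (inv_nonneg.mpr (sub_pos.mpr ha).le),
          div_eq_inv_mul]
    _ = ∫⁻ _ in Ioc a b, ENNReal.ofReal ((1 - F a)⁻¹) ∂F.measure := (setLIntegral_const _ _).symm
    _ ≤ ∫⁻ s in Ioc a b, ENNReal.ofReal ((1 - F s)⁻¹) ∂F.measure := by
        refine setLIntegral_mono (F.mono.measurable.const_sub 1).inv.ennreal_ofReal
          fun s hs => ENNReal.ofReal_le_ofReal (inv_anti₀ ?_ ?_)
        · linarith [F.mono hs.2]
        · linarith [F.mono hs.1.le]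

theorem lintegral_inv_one_sub_eq_top (F : StieltjesFunction ℝ) (hF : Continuous F)
    (h0 : Tendsto F atBot (𝓝 0)) (h1 : Tendsto F atTop (𝓝 1)) :
    ∫⁻ s, ENNReal.ofReal ((1 - F s)⁻¹) ∂F.measure = ⊤ := by
  have hε : ∀ k, 0 < (2⁻¹ : ℝ) ^ k := fun k => by positivity
  have hlt : ∀ k, (2⁻¹ : ℝ) ^ (k + 1) < 1 := fun k =>
    pow_lt_one₀ (by norm_num) (by norm_num) k.succ_ne_zero
  have hlevel : ∀ n : ℕ, ∃ t, F t = 1 - 2⁻¹ ^ (n + 1) := fun n =>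
    mem_range_of_exists_le_of_exists_ge hF
      (h0.eventually_le_const (sub_pos.mpr (hlt n))).exists
      (h1.eventually_const_le (sub_lt_self 1 (hε (n + 1)))).exists
  choose t ht using hlevel
  have ht_mono : Monotone t := monotone_nat_of_le_succ fun n => by
    by_contra! h
    have := F.mono h.le
    rw [ht, ht, pow_succ _ (n + 1)] at this
    linarith [hε (n + 1)]
  have hshell : ∀ n, ENNReal.ofReal 2⁻¹
      ≤ ∫⁻ s in Ioc (t n) (t (n + 1)), ENNReal.ofReal ((1 - F s)⁻¹) ∂F.measure := fun n => by
    convert F.ofReal_div_one_sub_le_setLIntegral_Ioc (ht_mono (by omega : n ≤ n + 1)) ?_ using 2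
    · rw [ht, ht, pow_succ _ (n + 1)]
      field_simp [(hε (n + 1)).ne']
      ring
    · rw [ht]
      linarith [hε (n + 1 + 1)]
  refine eq_top_iff.mpr ?_
  calc ⊤ = ∑' _ : ℕ, ENNReal.ofReal 2⁻¹ :=
        (ENNReal.tsum_const_eq_top_of_ne_zero (by norm_num)).symm
    _ ≤ ∑' n, ∫⁻ s in Ioc (t n) (t (n + 1)), ENNReal.ofReal ((1 - F s)⁻¹) ∂F.measure :=
        ENNReal.tsum_le_tsum hshell
    _ = ∫⁻ s in ⋃ n, Ioc (t n) (t (n + 1)), ENNReal.ofReal ((1 - F s)⁻¹) ∂F.measure :=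
        (lintegral_iUnion (fun _ => measurableSet_Ioc) ht_mono.pairwise_disjoint_on_Ioc_succ _).symm
    _ ≤ ∫⁻ s, ENNReal.ofReal ((1 - F s)⁻¹) ∂F.measure := setLIntegral_le_lintegral _ _

theorem lintegral_inv_one_sub_min_eq_top (F : StieltjesFunction ℝ) (hF : Continuous F)
    (h0 : Tendsto F atBot (𝓝 0)) (h1 : Tendsto F atTop (𝓝 1)) {T : ℝ}
    (hT : F.measure (Ioi T) = 0) :
    ∫⁻ s, ENNReal.ofReal ((1 - F (min s T))⁻¹) ∂F.measure = ⊤ := by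
  have hle : ∀ x, F x ≤ 1 := F.mono.ge_of_tendsto h1
  have hFT : F T = 1 := by
    rw [F.measure_Ioi h1, ENNReal.ofReal_eq_zero] at hT
    linarith [hle T]
  have hmin : ∀ s, F (min s T) = F s := fun s => by
    rcases le_total s T with hs | hs
    · rw [min_eq_left hs]
    · rw [min_eq_right hs]
      exact le_antisymm (F.mono hs) ((hle s).trans hFT.ge)
  simp_rw [hmin]
  exact F.lintegral_inv_one_sub_eq_top hF h0 h1

end StieltjesFunction

namespace ProbabilityTheory

variable {α : Type*} [MeasurableSpace α]

noncomputable def condCDFKernel (ρ : Measure (α × ℝ)) : Kernel α ℝ where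
  toFun a := (condCDF ρ a).measure
  measurable' := measurable_measure_condCDF ρ

lemma condCDFKernel_apply (ρ : Measure (α × ℝ)) (a : α) :
    condCDFKernel ρ a = (condCDF ρ a).measure := rfl

instance instIsMarkovKernelCondCDFKernel (ρ : Measure (α × ℝ)) :
    IsMarkovKernel (condCDFKernel ρ) :=
  ⟨fun a => by rw [condCDFKernel_apply]; infer_instance⟩

lemma compProd_fst_condCDFKernel (ρ : Measure (α × ℝ)) [IsFiniteMeasure ρ] :
    ρ.fst ⊗ₘ condCDFKernel ρ = ρ := by
  have h := compProd_toKernel (isCondKernelCDF_condCDF ρ)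
  rw [Measure.compProd]
  exact congrArg (· ()) h

lemma measurable_condCDF_uncurry (ρ : Measure (α × ℝ)) :
    Measurable fun p : α × ℝ => condCDF ρ p.1 p.2 := by
  have hIic : MeasurableSet {q : (α × ℝ) × ℝ | q.2 ≤ q.1.2} :=
    measurableSet_le measurable_snd (measurable_snd.comp measurable_fst)
  have := Kernel.measurable_kernel_prodMk_left (κ := (condCDFKernel ρ).prodMkRight ℝ) hIic
  convert this.ennreal_toReal using 1
  funext p
  change _ = ((condCDF ρ p.1).measure (Iic p.2)).toReal
  rw [measure_condCDF_Iic, ENNReal.toReal_ofReal (condCDF_nonneg ρ _ _)]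

end ProbabilityTheory

/-- Lemma 4.3 of the paper: let `X : Ω → α`, `S : Ω → ℝ` be measurable, and let `ρ`
be the law of `(X, S)`. If for `ρ.fst`-almost every `a` the conditional cumulative
distribution function `condCDF ρ a` is continuous, and
`∫ (1 - condCDF ρ (X ω) (min (S ω) T))⁻¹ dP(ω) < ∞`, then for every measurable
`B ⊆ α` with `P(X ∈ B) > 0` one has `P({X ∈ B} ∩ {S > T}) > 0`, i.e.
`P(S > T | σ(X)) > 0` a.s. -/
theorem pos_conditional_prob_of_finite_exp_moment {Ω α : Type*}
    [MeasurableSpace Ω] [MeasurableSpace α]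
    (P : Measure Ω) [IsProbabilityMeasure P]
    (X : Ω → α) (hX : Measurable X) (S : Ω → ℝ) (hS : Measurable S) (T : ℝ)
    (ρ : Measure (α × ℝ)) (hρ : ρ = Measure.map (fun ω => (X ω, S ω)) P)
    (hcont : ∀ᵐ a ∂ρ.fst, Continuous (condCDF ρ a))
    (hint : ∫⁻ ω, ENNReal.ofReal ((1 - condCDF ρ (X ω) (min (S ω) T))⁻¹) ∂P < ⊤) :
    ∀ B : Set α, MeasurableSet B → 0 < P (X ⁻¹' B) →
      0 < P (X ⁻¹' B ∩ {ω | T < S ω}) := by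
  intro B hB hBpos
  by_contra! hnull
  have hXS : Measurable fun ω => (X ω, S ω) := hX.prodMk hS
  have : IsProbabilityMeasure ρ := hρ ▸ Measure.isProbabilityMeasure_map hXS.aemeasurable
  have hρκ : ρ.fst ⊗ₘ condCDFKernel ρ = ρ := compProd_fst_condCDFKernel ρ
  have htail : ∀ᵐ a ∂ρ.fst.restrict B, condCDFKernel ρ a (Ioi T) = 0 := by
    refine (lintegral_eq_zero_iff ((condCDFKernel ρ).measurable_coe measurableSet_Ioi)).mp ?_
    rw [← Measure.compProd_apply_prod hB measurableSet_Ioi, hρκ, hρ,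
      Measure.map_apply hXS (hB.prod measurableSet_Ioi)]
    exact nonpos_iff_eq_zero.mp hnull
  set g : α × ℝ → ℝ≥0∞ := fun p => ENNReal.ofReal ((1 - condCDF ρ p.1 (min p.2 T))⁻¹)
  have hg : Measurable g := by
    refine (Measurable.const_sub ?_ 1).inv.ennreal_ofReal
    exact (measurable_condCDF_uncurry ρ).comp
      (measurable_fst.prodMk (measurable_snd.min measurable_const))
  have hfin : ∀ᵐ a ∂ρ.fst, ∫⁻ s, g (a, s) ∂condCDFKernel ρ a < ⊤ := by
    refine ae_lt_top hg.lintegral_kernel_prod_right' (ne_of_lt ?_)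
    rwa [← Measure.lintegral_compProd hg, hρκ, hρ, lintegral_map hg hXS]
  have : (ae (ρ.fst.restrict B)).NeBot := by
    rw [ae_neBot, Ne, Measure.restrict_eq_zero, hρ, Measure.fst_map_prodMk hS,
      Measure.map_apply hX hB]
    exact hBpos.ne'
  obtain ⟨a, ha_tail, ha_cont, ha_fin⟩ :=
    (htail.and ((ae_restrict_of_ae hcont).and (ae_restrict_of_ae hfin))).exists
  exact ha_fin.ne ((condCDF ρ a).lintegral_inv_one_sub_min_eq_top ha_cont
    (tendsto_condCDF_atBot ρ a) (tendsto_condCDF_atTop ρ a) ha_tail)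
end

section
/- Let a : ℝ → ℝ be continuous and nondecreasing, let T > 0, s₀ ∈ (0, T], and w ∈ ℝ. Define Y(t) = w·e^{a(t)} if t < s₀ and Y(t) = 0 otherwise, and Z(t) = −w·e^{a(t)}. Let μ_N be the Lebesgue–Stieltjes measure of the nondecreasing right-continuous function t ↦ 1_{[s₀,∞)}(t), and μ_A the Lebesgue–Stieltjes measure of the nondecreasing continuous function t ↦ a(min(t, s₀)). Then for every t ∈ [0, T]: Y(t) + ∫_{(t,T]} Z(s) μ_N(ds) = ∫_{(t,T]} Z(s) μ_A(ds). -/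
/-!
The jump measure `μ_N` is the Dirac mass at `s₀`, so the jump integral is `Z s₀ · 1_{t < s₀}`.
The compensator measure `μ_A` does not charge `(s₀, T]`, and on `(t, s₀]` we have
`Z = -w e^{A}`. A continuous Stieltjes function `A` pushes `μ_A` restricted to `(t, u]` forward to
Lebesgue measure on `(A t, A u]`, so `∫_{(t,T]} Z dμ_A = -w (e^{a s₀} - e^{A t})`, which is
exactly `Y t + ∫_{(t,T]} Z dμ_N`.
-/

open MeasureTheory Set Real

theorem Monotone.exists_preimage_Iic_eq_Iic {f : ℝ → ℝ} (hmono : Monotone f) (hf : Continuous f)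
    {x y c : ℝ} (hx : f x ≤ c) (hy : c < f y) : ∃ α, f α = c ∧ f ⁻¹' Iic c = Iic α := by
  have hbdd : BddAbove (f ⁻¹' Iic c) :=
    ⟨y, fun s hs => le_of_not_gt fun hys => (hy.trans_le (hmono hys.le)).not_ge hs⟩
  set α := sSup (f ⁻¹' Iic c)
  have hα : f α ≤ c := (isClosed_Iic.preimage hf).csSup_mem ⟨x, hx⟩ hbdd
  have hαy : α ≤ y := le_of_not_gt fun hyα => (hy.trans_le (hmono hyα.le)).not_ge hα
  obtain ⟨s, hs, hfs⟩ := intermediate_value_Icc hαy hf.continuousOn ⟨hα, hy.le⟩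
  have hsα : s = α := le_antisymm (le_csSup hbdd hfs.le) hs.1
  refine ⟨α, hsα ▸ hfs, Subset.antisymm (fun s hs => le_csSup hbdd hs) fun s hs => ?_⟩
  exact (hmono hs).trans hα

namespace StieltjesFunction

theorem measure_eq_dirac_of_eq_indicator (G : StieltjesFunction ℝ) (s₀ : ℝ)
    (hG : ∀ t, G t = if s₀ ≤ t then 1 else 0) : G.measure = Measure.dirac s₀ := by
  refine Measure.ext_of_Ioc _ _ fun c d hcd => ?_
  rw [G.measure_Ioc, Measure.dirac_apply' _ measurableSet_Ioc, hG, hG]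
  by_cases hc : s₀ ≤ c
  · simp [hc, hc.trans hcd.le, not_lt.mpr hc]
  · by_cases hd : s₀ ≤ d <;> simp [hc, hd, not_le.mp hc]

theorem map_measure_restrict_Ioc (f : StieltjesFunction ℝ) (hf : Continuous f) (t u : ℝ) :
    (f.measure.restrict (Ioc t u)).map f = volume.restrict (Ioc (f t) (f u)) := by
  have : IsFiniteMeasure (f.measure.restrict (Ioc t u)) :=
    isFiniteMeasure_restrict.mpr measure_Ioc_lt_top.ne
  refine Measure.ext_of_Iic _ _ fun c => ?_
  rw [Measure.map_apply hf.measurable measurableSet_Iic, Measure.restrict_apply measurableSet_Iic,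
    Measure.restrict_apply (hf.measurable measurableSet_Iic)]
  rcases lt_or_ge c (f t) with hct | htc
  · have h1 : f ⁻¹' Iic c ∩ Ioc t u = ∅ :=
      eq_empty_of_forall_notMem fun s hs => (hct.trans_le (f.mono hs.2.1.le)).not_ge hs.1
    have h2 : Iic c ∩ Ioc (f t) (f u) = ∅ :=
      eq_empty_of_forall_notMem fun s hs => (hct.trans hs.2.1).not_ge hs.1
    rw [h1, h2, measure_empty, measure_empty]
  rcases lt_or_ge c (f u) with hcu | huc
  · obtain ⟨α, hαc, hpre⟩ := f.mono.exists_preimage_Iic_eq_Iic hf htc hcu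
    have hαu : α ≤ u := le_of_not_gt fun huα => (hcu.trans_le (hαc ▸ f.mono huα.le)).false
    rw [hpre, Iic_inter_Ioc_of_le hαu, Iic_inter_Ioc_of_le hcu.le, f.measure_Ioc, hαc,
      Real.volume_Ioc]
  · have h1 : Ioc t u ⊆ f ⁻¹' Iic c := fun s hs => (f.mono hs.2).trans huc
    have h2 : Ioc (f t) (f u) ⊆ Iic c := fun s hs => hs.2.trans huc
    rw [inter_eq_right.mpr h1, inter_eq_right.mpr h2, f.measure_Ioc, Real.volume_Ioc]

theorem setIntegral_comp_Ioc {E : Type*} [NormedAddCommGroup E] [NormedSpace ℝ E]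
    (f : StieltjesFunction ℝ) (hf : Continuous f) {t u : ℝ} (htu : t ≤ u) {g : ℝ → E}
    (hg : AEStronglyMeasurable g (volume.restrict (Ioc (f t) (f u)))) :
    ∫ s in Ioc t u, g (f s) ∂f.measure = ∫ x in f t..f u, g x := by
  rw [intervalIntegral.integral_of_le (f.mono htu), ← f.map_measure_restrict_Ioc hf t u,
    integral_map hf.aemeasurable]
  rwa [f.map_measure_restrict_Ioc hf t u]

end StieltjesFunction

theorem single_jump_bsde_nonuniqueness_general (a : ℝ → ℝ) (ha : Continuous a)
    (T s₀ w : ℝ) (hs₀ : s₀ ∈ Set.Ioc 0 T)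
    (Y Z : ℝ → ℝ)
    (hY : ∀ t, Y t = if t < s₀ then w * Real.exp (a t) else 0)
    (hZ : ∀ t, Z t = -(w * Real.exp (a t)))
    (G : StieltjesFunction ℝ) (hG : ∀ t, G t = if s₀ ≤ t then 1 else 0)
    (Aa : StieltjesFunction ℝ) (hAa : ∀ t, Aa t = a (min t s₀)) :
    ∀ t ∈ Set.Icc (0 : ℝ) T,
      Y t + ∫ s in Set.Ioc t T, Z s ∂G.measure
        = ∫ s in Set.Ioc t T, Z s ∂Aa.measure := by
  intro t ht
  have hAa_cont : Continuous Aa := by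
    rw [show ⇑Aa = fun t => a (min t s₀) from funext hAa]
    fun_prop
  have hAa_T : Aa T = a s₀ := by rw [hAa, min_eq_right hs₀.2]
  have hN : ∫ s in Ioc t T, Z s ∂G.measure = if t < s₀ then Z s₀ else 0 := by
    rw [G.measure_eq_dirac_of_eq_indicator s₀ hG, setIntegral_dirac]
    simp [hs₀.2]
  have hA_null : Aa.measure (Ioc s₀ T) = 0 := by
    rw [Aa.measure_Ioc, hAa_T, hAa, min_self, sub_self, ENNReal.ofReal_zero]
  have hZ_ae : Z =ᵐ[Aa.measure.restrict (Ioc t T)] fun s => -(w * exp (Aa s)) := by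
    filter_upwards [ae_restrict_mem measurableSet_Ioc,
      ae_restrict_of_ae (measure_eq_zero_iff_ae_notMem.mp hA_null)] with s hs hs_null
    have hss₀ : s ≤ s₀ := le_of_not_gt fun h => hs_null ⟨h, hs.2⟩
    rw [hZ, hAa, min_eq_left hss₀]
  have hA : ∫ s in Ioc t T, Z s ∂Aa.measure = -(w * (exp (a s₀) - exp (Aa t))) := by
    rw [integral_congr_ae hZ_ae,
      Aa.setIntegral_comp_Ioc (g := fun x => -(w * exp x)) hAa_cont ht.2 (by fun_prop),
      intervalIntegral.integral_neg, intervalIntegral.integral_const_mul, integral_exp, hAa_T]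
  rw [hY, hN, hA, hAa t]
  split_ifs with hts
  · rw [hZ, min_eq_left hts.le]
    ring
  · rw [min_eq_right (not_lt.mp hts)]
    ring

/-- Nonuniqueness example: let `a : ℝ → ℝ` be continuous and nondecreasing,
`T > 0`, `s₀ ∈ (0,T]`, `w ∈ ℝ`, and set `Y t = w·e^{a(t)}·1_{t < s₀}`,
`Z t = -w·e^{a(t)}`. Let `μ_N` be the Lebesgue–Stieltjes measure of
`t ↦ 1_{[s₀,∞)}(t)` (a Stieltjes function `G`) and `μ_A` that of
`t ↦ a(min(t, s₀))` (a Stieltjes function `Aa`). Then for every `t ∈ [0,T]`,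
`Y t + ∫_{(t,T]} Z dμ_N = ∫_{(t,T]} Z dμ_A`. -/
theorem single_jump_bsde_nonuniqueness (a : ℝ → ℝ) (ha : Continuous a)
    (hmono : Monotone a) (T s₀ w : ℝ) (hT : 0 < T) (hs₀ : s₀ ∈ Set.Ioc 0 T)
    (Y Z : ℝ → ℝ)
    (hY : ∀ t, Y t = if t < s₀ then w * Real.exp (a t) else 0)
    (hZ : ∀ t, Z t = -(w * Real.exp (a t)))
    (G : StieltjesFunction ℝ) (hG : ∀ t, G t = if s₀ ≤ t then 1 else 0)
    (Aa : StieltjesFunction ℝ) (hAa : ∀ t, Aa t = a (min t s₀)) :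
    ∀ t ∈ Set.Icc (0 : ℝ) T,
      Y t + ∫ s in Set.Ioc t T, Z s ∂G.measure
        = ∫ s in Set.Ioc t T, Z s ∂Aa.measure :=
  single_jump_bsde_nonuniqueness_general a ha T s₀ w hs₀ Y Z hY hZ G hG Aa hAa
end
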